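/- (High-frequency eigenvalue asymptotics) Suppose ρ̄, η > 0 and P'(ρ̄), γ ∈ ℝ. For the equation λ² + η|ξ|²λ + ρ̄|ξ|²(P'(ρ̄)/ρ̄ + γ − γ|ξ|²/(1+|ξ|²)) = 0, as |ξ| → ∞ the roots satisfy λ+(ξ) = −P'(ρ̄)/η + O(|ξ|^{−2}) and λ−(ξ) = −η|ξ|² + P'(ρ̄)/η + O(|ξ|^{−2}). -/
import Mathlib


noncomputable section

/-- The constant coefficient `c(ξ) = ρ̄|ξ|²(P'(ρ̄)/ρ̄ + γ − γ|ξ|²/(1+|ξ|²))`,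
as a function of `x = |ξ|`. -/
def charConst (ρ γ Pρ x : ℝ) : ℝ :=
  ρ * x ^ 2 * (Pρ / ρ + γ - γ * x ^ 2 / (1 + x ^ 2))

/-- The larger root `λ₊` of `λ² + η x² λ + c = 0`. -/
def lamPlus (η ρ γ Pρ x : ℝ) : ℝ :=
  (-(η * x ^ 2) + Real.sqrt (η ^ 2 * x ^ 4 - 4 * charConst ρ γ Pρ x)) / 2

/-- The smaller root `λ₋` of `λ² + η x² λ + c = 0`. -/
def lamMinus (η ρ γ Pρ x : ℝ) : ℝ :=
  (-(η * x ^ 2) - Real.sqrt (η ^ 2 * x ^ 4 - 4 * charConst ρ γ Pρ x)) / 2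

set_option maxHeartbeats 1000000 in
lemma key (η ρ γ Pρ x : ℝ) (hη : 0 < η) (hρ : 0 < ρ) (hx1 : 1 ≤ x)
    (hx2 : 8 * (|Pρ| + ρ * |γ|) ≤ η ^ 2 * x ^ 2) :
    (lamPlus η ρ γ Pρ x) ^ 2 + η * x ^ 2 * lamPlus η ρ γ Pρ x + charConst ρ γ Pρ x = 0 ∧
    (lamMinus η ρ γ Pρ x) ^ 2 + η * x ^ 2 * lamMinus η ρ γ Pρ x + charConst ρ γ Pρ x = 0 ∧
    |lamPlus η ρ γ Pρ x - (-(Pρ / η))| ≤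
      (4 * |Pρ| * (|Pρ| + ρ * |γ|) / η ^ 3 + 6 * ρ * |γ| / η) * x⁻¹ ^ 2 ∧
    |lamMinus η ρ γ Pρ x - (-(η * x ^ 2) + Pρ / η)| ≤
      (4 * |Pρ| * (|Pρ| + ρ * |γ|) / η ^ 3 + 6 * ρ * |γ| / η) * x⁻¹ ^ 2 := by
  have hx0 : (0:ℝ) < x := lt_of_lt_of_le one_pos hx1
  set M : ℝ := |Pρ| + ρ * |γ| with hM
  have hM0 : 0 ≤ M := by positivity
  set c : ℝ := charConst ρ γ Pρ x with hcdef
  have h1x : (0:ℝ) < 1 + x ^ 2 := by positivity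
  have hC : c * (1 + x ^ 2) = Pρ * x ^ 2 * (1 + x ^ 2) + ρ * γ * x ^ 2 := by
    rw [hcdef]; unfold charConst; field_simp; ring
  have hPa := le_abs_self Pρ
  have hPb := neg_abs_le Pρ
  have hga := le_abs_self γ
  have hgb := neg_abs_le γ
  have hup : c * (1 + x ^ 2) ≤ M * x ^ 2 * (1 + x ^ 2) := by
    rw [hC, hM]
    linarith only [mul_le_mul_of_nonneg_right hPa (show (0:ℝ) ≤ x^2*(1+x^2) by positivity),
      mul_le_mul_of_nonneg_right (mul_le_mul_of_nonneg_left hga hρ.le) (sq_nonneg x),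
      mul_nonneg (mul_nonneg (mul_nonneg hρ.le (abs_nonneg γ)) (sq_nonneg x)) (sq_nonneg x)]
  have hlo : -(M * x ^ 2) * (1 + x ^ 2) ≤ c * (1 + x ^ 2) := by
    rw [hC, hM]
    linarith only [mul_le_mul_of_nonneg_right hPb (show (0:ℝ) ≤ x^2*(1+x^2) by positivity),
      mul_le_mul_of_nonneg_right (mul_le_mul_of_nonneg_left hgb hρ.le) (sq_nonneg x),
      mul_nonneg (mul_nonneg (mul_nonneg hρ.le (abs_nonneg γ)) (sq_nonneg x)) (sq_nonneg x)]
  have hc : |c| ≤ M * x ^ 2 := by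
    rw [abs_le]
    exact ⟨le_of_mul_le_mul_right hlo h1x, le_of_mul_le_mul_right hup h1x⟩
  -- discriminant
  have hcx : 8 * M * x ^ 2 ≤ η ^ 2 * x ^ 2 * x ^ 2 := mul_le_mul_of_nonneg_right hx2 (sq_nonneg x)
  have hMx : 0 ≤ M * x ^ 2 := mul_nonneg hM0 (sq_nonneg x)
  have hD0 : (0:ℝ) ≤ η ^ 2 * x ^ 4 - 4 * c := by
    linarith only [(abs_le.1 hc).2, hcx, hMx]
  set s : ℝ := Real.sqrt (η ^ 2 * x ^ 4 - 4 * c) with hsdef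
  have hs2 : s ^ 2 = η ^ 2 * x ^ 4 - 4 * c := Real.sq_sqrt hD0
  have hs0 : 0 ≤ s := Real.sqrt_nonneg _
  have hs_lb : η * x ^ 2 / 2 ≤ s := by
    rw [hsdef]
    rw [show η * x ^ 2 / 2 = Real.sqrt ((η * x ^ 2 / 2) ^ 2) from
      (Real.sqrt_sq (by positivity)).symm]
    apply Real.sqrt_le_sqrt
    linarith only [(abs_le.1 hc).2, hcx, hMx]
  have hs_ub : s ≤ 2 * (η * x ^ 2) := by
    rw [hsdef]
    rw [show 2 * (η * x ^ 2) = Real.sqrt ((2 * (η * x ^ 2)) ^ 2) from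
      (Real.sqrt_sq (by positivity)).symm]
    apply Real.sqrt_le_sqrt
    linarith only [(abs_le.1 hc).1, hcx, hMx]
  have hLP : lamPlus η ρ γ Pρ x = (-(η * x ^ 2) + s) / 2 := rfl
  have hLM : lamMinus η ρ γ Pρ x = (-(η * x ^ 2) - s) / 2 := rfl
  have hSpos : 0 < η * x ^ 2 + s := by
    have := mul_pos hη (pow_pos hx0 2); linarith
  have hS_ub : η * x ^ 2 + s ≤ 3 * (η * x ^ 2) := by linarith
  have hSq : η ^ 2 * x ^ 4 ≤ (η * x ^ 2 + s) ^ 2 := by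
    linarith only [mul_nonneg hs0 (mul_pos hη (pow_pos hx0 2)).le, sq_nonneg s]
  set e : ℝ := lamPlus η ρ γ Pρ x - (-(Pρ / η)) with hedef
  have hηe : η * e = η * ((-(η * x ^ 2) + s) / 2) + Pρ := by
    rw [hedef, hLP]
    field_simp
    ring
  have he : η * (η * x ^ 2 + s) ^ 2 * e * (1 + x ^ 2) =
      -(4 * Pρ * c * (1 + x ^ 2)) - 2 * η * ρ * γ * x ^ 2 * (η * x ^ 2 + s) := by
    linear_combination ((η * x ^ 2 + s) ^ 2 * (1 + x ^ 2)) * hηe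
      + ((η / 2) * (1 + x ^ 2) * (η * x ^ 2 + s) + Pρ * (1 + x ^ 2)) * hs2
      - 2 * η * (η * x ^ 2 + s) * hC
  set B : ℝ := 4 * |Pρ| * (M * x ^ 2) * (1 + x ^ 2) + 2 * η * ρ * |γ| * x ^ 2 * (3 * (η * x ^ 2))
    with hBdef
  have habs : |η * (η * x ^ 2 + s) ^ 2 * e * (1 + x ^ 2)| ≤ B := by
    rw [he, hBdef]
    have h1 : |(-(4 * Pρ * c * (1 + x ^ 2)) - 2 * η * ρ * γ * x ^ 2 * (η * x ^ 2 + s))|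
        ≤ |4 * Pρ * c * (1 + x ^ 2)| + |2 * η * ρ * γ * x ^ 2 * (η * x ^ 2 + s)| := by
      calc |(-(4 * Pρ * c * (1 + x ^ 2)) - 2 * η * ρ * γ * x ^ 2 * (η * x ^ 2 + s))|
          = |(4 * Pρ * c * (1 + x ^ 2)) + 2 * η * ρ * γ * x ^ 2 * (η * x ^ 2 + s)| := by
            rw [show (-(4 * Pρ * c * (1 + x ^ 2)) - 2 * η * ρ * γ * x ^ 2 * (η * x ^ 2 + s))
              = -((4 * Pρ * c * (1 + x ^ 2)) + 2 * η * ρ * γ * x ^ 2 * (η * x ^ 2 + s)) by ring,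
              abs_neg]
        _ ≤ _ := abs_add_le _ _
    refine h1.trans ?_
    have h2 : |4 * Pρ * c * (1 + x ^ 2)| = 4 * |Pρ| * |c| * (1 + x ^ 2) := by
      rw [abs_mul, abs_mul, abs_mul, abs_of_nonneg (by norm_num : (0:ℝ) ≤ (4:ℝ)),
        abs_of_nonneg h1x.le]
    have h3 : |2 * η * ρ * γ * x ^ 2 * (η * x ^ 2 + s)| =
        2 * η * ρ * |γ| * x ^ 2 * (η * x ^ 2 + s) := by
      rw [abs_mul, abs_mul, abs_mul, abs_mul, abs_mul,
        abs_of_nonneg (by norm_num : (0:ℝ) ≤ (2:ℝ)), abs_of_nonneg hη.le,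
        abs_of_nonneg hρ.le, abs_of_nonneg (sq_nonneg x), abs_of_nonneg hSpos.le]
    rw [h2, h3]
    have h4 : 4 * |Pρ| * |c| * (1 + x ^ 2) ≤ 4 * |Pρ| * (M * x ^ 2) * (1 + x ^ 2) := by
      have h := mul_le_mul_of_nonneg_right
        (mul_le_mul_of_nonneg_left hc (by positivity : (0:ℝ) ≤ 4 * |Pρ|)) h1x.le
      linarith only [h]
    have h5 : 2 * η * ρ * |γ| * x ^ 2 * (η * x ^ 2 + s) ≤
        2 * η * ρ * |γ| * x ^ 2 * (3 * (η * x ^ 2)) :=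
      mul_le_mul_of_nonneg_left hS_ub (by positivity)
    linarith
  set C0 : ℝ := 4 * |Pρ| * M / η ^ 3 + 6 * ρ * |γ| / η with hC0def
  have hC0nn : 0 ≤ C0 := by rw [hC0def]; positivity
  have hC0 : C0 * η ^ 3 = 4 * |Pρ| * M + 6 * ρ * |γ| * η ^ 2 := by
    rw [hC0def]; field_simp
  have hpos : 0 < η * (η * x ^ 2 + s) ^ 2 * (1 + x ^ 2) :=
    mul_pos (mul_pos hη (pow_pos hSpos 2)) h1x
  have h3' : |e| * (η * (η * x ^ 2 + s) ^ 2 * (1 + x ^ 2)) =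
      |η * (η * x ^ 2 + s) ^ 2 * e * (1 + x ^ 2)| := by
    rw [abs_mul, abs_mul, abs_mul, abs_of_nonneg hη.le,
      abs_of_nonneg (sq_nonneg (η * x ^ 2 + s)), abs_of_nonneg h1x.le]
    ring
  have h4' : |e| ≤ B / (η * (η * x ^ 2 + s) ^ 2 * (1 + x ^ 2)) :=
    (le_div_iff₀ hpos).mpr (h3' ▸ habs)
  have hE : |e| ≤ C0 * x⁻¹ ^ 2 := by
    refine h4'.trans ?_
    rw [inv_pow, ← div_eq_mul_inv, div_le_div_iff₀ hpos (pow_pos hx0 2)]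
    have hC0' : C0 * η ^ 3 * (x ^ 4 + x ^ 6) =
        (4 * |Pρ| * M + 6 * ρ * |γ| * η ^ 2) * (x ^ 4 + x ^ 6) := by
      rw [hC0]
    have hint1 : 0 ≤ C0 * η * (1 + x ^ 2) * ((η * x ^ 2 + s) ^ 2 - η ^ 2 * x ^ 4) :=
      mul_nonneg (by positivity) (sub_nonneg.2 hSq)
    have hint2 : 0 ≤ 6 * ρ * |γ| * η ^ 2 * x ^ 4 := by positivity
    have hint3 : 0 ≤ 4 * |Pρ| * M * x ^ 4 := by positivity
    rw [hBdef]
    linarith only [hC0', hint1, hint2, hint3]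

  refine ⟨?_, ?_, ?_, ?_⟩
  · rw [hLP]; linear_combination hs2 / 4
  · rw [hLM]; linear_combination hs2 / 4
  · exact hE
  · have hne : lamMinus η ρ γ Pρ x - (-(η * x ^ 2) + Pρ / η) = -e := by
      rw [hedef, hLM, hLP]; ring
    rw [hne, abs_neg]; exact hE

/-- High-frequency asymptotics of the eigenvalues: as `|ξ| → ∞`,
`λ₊(ξ) = −P'(ρ̄)/η + O(|ξ|⁻²)` and `λ₋(ξ) = −η|ξ|² + P'(ρ̄)/η + O(|ξ|⁻²)`. -/
theorem stmt_4 (d : ℕ) (hd : 0 < d) (η ρ γ Pρ : ℝ) (hη : 0 < η) (hρ : 0 < ρ) :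
    ∃ C R : ℝ, 0 < C ∧ 0 < R ∧
      ∀ ξ : EuclideanSpace ℝ (Fin d), R ≤ ‖ξ‖ →
        (lamPlus η ρ γ Pρ ‖ξ‖) ^ 2 + η * ‖ξ‖ ^ 2 * lamPlus η ρ γ Pρ ‖ξ‖
            + charConst ρ γ Pρ ‖ξ‖ = 0 ∧
        (lamMinus η ρ γ Pρ ‖ξ‖) ^ 2 + η * ‖ξ‖ ^ 2 * lamMinus η ρ γ Pρ ‖ξ‖
            + charConst ρ γ Pρ ‖ξ‖ = 0 ∧
        |lamPlus η ρ γ Pρ ‖ξ‖ - (-(Pρ / η))| ≤ C * ‖ξ‖⁻¹ ^ 2 ∧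
        |lamMinus η ρ γ Pρ ‖ξ‖ - (-(η * ‖ξ‖ ^ 2) + Pρ / η)| ≤ C * ‖ξ‖⁻¹ ^ 2 := by
  refine ⟨4 * |Pρ| * (|Pρ| + ρ * |γ|) / η ^ 3 + 6 * ρ * |γ| / η + 1,
    1 + 8 * (|Pρ| + ρ * |γ|) / η ^ 2, by positivity, by positivity, ?_⟩
  intro ξ hx
  have hx1 : (1:ℝ) ≤ ‖ξ‖ := le_trans (le_add_of_nonneg_right (by positivity)) hx
  have hx2 : 8 * (|Pρ| + ρ * |γ|) ≤ η ^ 2 * ‖ξ‖ ^ 2 := by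
    have h8 : 8 * (|Pρ| + ρ * |γ|) / η ^ 2 ≤ ‖ξ‖ :=
      le_trans (le_add_of_nonneg_left zero_le_one) hx
    have ha : 8 * (|Pρ| + ρ * |γ|) ≤ ‖ξ‖ * η ^ 2 := (div_le_iff₀ (by positivity)).1 h8
    have hb : ‖ξ‖ ≤ ‖ξ‖ ^ 2 := by nlinarith [hx1]
    have hcpr := mul_le_mul_of_nonneg_left hb (sq_nonneg η)
    linarith only [ha, hcpr]
  obtain ⟨h1, h2, h3, h4⟩ := key η ρ γ Pρ ‖ξ‖ hη hρ hx1 hx2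
  have hstep : (4 * |Pρ| * (|Pρ| + ρ * |γ|) / η ^ 3 + 6 * ρ * |γ| / η) * ‖ξ‖⁻¹ ^ 2 ≤
      (4 * |Pρ| * (|Pρ| + ρ * |γ|) / η ^ 3 + 6 * ρ * |γ| / η + 1) * ‖ξ‖⁻¹ ^ 2 :=
    mul_le_mul_of_nonneg_right (by linarith) (by positivity)
  exact ⟨h1, h2, h3.trans hstep, h4.trans hstep⟩
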